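/- Let n ≥ 2 and let u, w : ℝⁿ → ℂ be continuous and h : ℝⁿ → ℝ be continuous on ℝⁿ∖{0}. Then ∫_{ℝⁿ} |u(x)|·|h(x)|·|w(x)| dx ≤ ( ∫_{ℝⁿ} |w(x)|²/|x| dx )^{1/2} · ( sup_{R>0} (1/R²) ∫_{|x|=R} |u|² dσ )^{1/2} · ( ∫₀^{∞} r³ · sup_{|x|=r} |h(x)|² dr )^{1/2}, where dσ is the surface measure on the sphere {|x| = R}. -/

import Mathlib

open MeasureTheory Metric Real Set
open scoped ENNReal

noncomputable section

abbrev Euc (n : ℕ) := EuclideanSpace ℝ (Fin n)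

/-- Dyadic shell `C(j) = {2^j ≤ |x| ≤ 2^{j+1}}`. -/
def shell (n : ℕ) (j : ℤ) : Set (Euc n) := {x | (2 : ℝ) ^ j ≤ ‖x‖ ∧ ‖x‖ ≤ (2 : ℝ) ^ (j + 1)}

/-- `N(f) = Σ_{j∈ℤ} (2^{j+1} ∫_{C(j)} |f|²)^{1/2}` (with values in `ℝ≥0∞`). -/
def NnormE {n : ℕ} (f : Euc n → ℂ) : ℝ≥0∞ :=
  ∑' j : ℤ, (ENNReal.ofReal ((2 : ℝ) ^ (j + 1)) *
      ∫⁻ x in shell n j, (‖f x‖₊ : ℝ≥0∞) ^ 2) ^ (1/2 : ℝ)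

/-- Squared Morrey–Campanato norm `|||g|||² = sup_{R>0} (1/R)∫_{|x|≤R}|g|²`
(with values in `ℝ≥0∞`). -/
def morreySq {n : ℕ} (g : Euc n → ℂ) : ℝ≥0∞ :=
  ⨆ (R : ℝ) (_ : 0 < R),
    (ENNReal.ofReal R)⁻¹ * ∫⁻ x in Metric.closedBall (0 : Euc n) R, (‖g x‖₊ : ℝ≥0∞) ^ 2

/-- Surface integral over the sphere `{|x| = R}`: via polar coordinates,
`∫_{|x|=R} g dσ = R^{n-1} ∫_{ω ∈ S^{n-1}} g(Rω) dσ₁(ω)` where `σ₁ = volume.toSphere`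
is the surface measure of the unit sphere. -/
def sphereLIntegral (n : ℕ) (R : ℝ) (g : Euc n → ℝ≥0∞) : ℝ≥0∞ :=
  ENNReal.ofReal (R ^ (n - 1)) * ∫⁻ ω : Metric.sphere (0 : Euc n) 1, g (R • (ω : Euc n))
    ∂((volume : Measure (Euc n)).toSphere)

/-- `sup_{R>0} (1/R²) ∫_{|x|=R} |u|² dσ` (with values in `ℝ≥0∞`). -/
def sphereSup {n : ℕ} (u : Euc n → ℂ) : ℝ≥0∞ :=
  ⨆ (R : ℝ) (_ : 0 < R),
    (ENNReal.ofReal (R ^ 2))⁻¹ * sphereLIntegral n R (fun x => (‖u x‖₊ : ℝ≥0∞) ^ 2)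

/-!
Split `|u| |h| |w| = (|u| |h| |x|^{1/2}) · (|w| |x|^{-1/2})` and apply Cauchy–Schwarz. In polar
coordinates the square of the first factor integrates to
`∫₀^∞ r · r^{n-1} ∫_{S^{n-1}} |u(rω)|² h(rω)² dσ(ω) dr ≤ ∫₀^∞ r · sup_{|x|=r} h² · r² S dr`,
where `S = sup_R R⁻² ∫_{|x|=R} |u|² dσ`.

Everything lives in `ℝ≥0∞`, so no integrability is needed; pulling `S`, possibly `∞`, out of the
radial integral needs measurability of `r ↦ sup_{|x|=r} h²`, which is lower semicontinuous as a
supremum of continuous functions of `r`.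
-/

section PolarCoordinates

variable {E : Type*} [NormedAddCommGroup E] [NormedSpace ℝ E]

theorem lintegral_eq_lintegral_Ioi_toSphere [MeasurableSpace E] [BorelSpace E]
    [FiniteDimensional ℝ E] [Nontrivial E] (μ : Measure E) [μ.IsAddHaarMeasure]
    {f : E → ℝ≥0∞} (hf : Measurable f) :
    ∫⁻ x, f x ∂μ = ∫⁻ r in Ioi (0 : ℝ),
      ENNReal.ofReal (r ^ (Module.finrank ℝ E - 1)) * ∫⁻ ω, f (r • (ω : E)) ∂μ.toSphere := by
  have hf' : Measurable fun p : sphere (0 : E) 1 × Ioi (0 : ℝ) => f ((p.2 : ℝ) • (p.1 : E)) := by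
    fun_prop
  calc ∫⁻ x, f x ∂μ = ∫⁻ x : ({0}ᶜ : Set E), f x ∂μ.comap (↑) := by
        rw [lintegral_subtype_comap (measurableSet_singleton _).compl, restrict_compl_singleton]
    _ = ∫⁻ p, f ((p.2 : ℝ) • (p.1 : E))
          ∂μ.toSphere.prod (.volumeIoiPow (Module.finrank ℝ E - 1)) := by
        rw [← μ.measurePreserving_homeomorphUnitSphereProd.lintegral_comp_emb
          (Homeomorph.measurableEmbedding _) fun p => f ((p.2 : ℝ) • (p.1 : E))]
        refine lintegral_congr fun x => ?_
        simp [smul_inv_smul₀ (norm_ne_zero_iff.2 x.2)]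
    _ = ∫⁻ r, ∫⁻ ω, f ((r : ℝ) • (ω : E)) ∂μ.toSphere
          ∂.volumeIoiPow (Module.finrank ℝ E - 1) :=
        lintegral_prod_symm _ hf'.aemeasurable
    _ = _ := by
        rw [Measure.volumeIoiPow, lintegral_withDensity_eq_lintegral_mul _ (by fun_prop)
          hf'.lintegral_prod_left']
        exact lintegral_subtype_comap measurableSet_Ioi fun r =>
          ENNReal.ofReal (r ^ (Module.finrank ℝ E - 1)) * ∫⁻ ω, f (r • (ω : E)) ∂μ.toSphere

theorem iSup_sphere_eq_iSup_unitSphere {α : Type*} [CompleteLattice α] {r : ℝ} (hr : 0 < r)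
    (g : E → α) : ⨆ x ∈ sphere (0 : E) r, g x = ⨆ ω : sphere (0 : E) 1, g (r • (ω : E)) := by
  have hsphere : sphere (0 : E) r = (r • ·) '' sphere 0 1 := by
    rw [Set.image_smul, smul_sphere' hr.ne', smul_zero, Real.norm_of_nonneg hr.le, mul_one]
  rw [hsphere, iSup_image, iSup_subtype']

theorem aemeasurable_iSup_sphere {g : E → ℝ≥0∞} (hg : ContinuousOn g {0}ᶜ) :
    AEMeasurable (fun r : ℝ => ⨆ x ∈ sphere (0 : E) r, g x) (volume.restrict (Ioi 0)) := by
  rw [aemeasurable_restrict_iff_comap_subtype measurableSet_Ioi]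
  have hlsc : LowerSemicontinuous fun r : Ioi (0 : ℝ) =>
      ⨆ ω : sphere (0 : E) 1, g ((r : ℝ) • (ω : E)) :=
    lowerSemicontinuous_iSup fun ω =>
      (hg.comp_continuous (continuous_subtype_val.smul continuous_const) fun r =>
        smul_ne_zero r.2.out.ne' (ne_of_mem_sphere ω.2 one_ne_zero)).lowerSemicontinuous
  refine hlsc.measurable.aemeasurable.congr (.of_forall fun r => ?_)
  exact (iSup_sphere_eq_iSup_unitSphere r.2.out g).symm

end PolarCoordinates

theorem ENNReal.lintegral_mul_le_weighted_L2 {α : Type*} [MeasurableSpace α] {μ : Measure α}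
    {f g ρ : α → ℝ≥0∞} (hf : AEMeasurable f μ) (hg : AEMeasurable g μ) (hρ : AEMeasurable ρ μ)
    (hρ0 : ∀ᵐ x ∂μ, ρ x ≠ 0) (hρtop : ∀ᵐ x ∂μ, ρ x ≠ ∞) :
    ∫⁻ x, f x * g x ∂μ ≤
      (∫⁻ x, f x ^ 2 * ρ x ∂μ) ^ (1 / 2 : ℝ) * (∫⁻ x, g x ^ 2 * (ρ x)⁻¹ ∂μ) ^ (1 / 2 : ℝ) := by
  have hsq : ∀ a b : ℝ≥0∞, (a * b ^ (1 / 2 : ℝ)) ^ (2 : ℝ) = a ^ 2 * b := fun a b => by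
    rw [ENNReal.mul_rpow_of_nonneg _ _ zero_le_two, ← ENNReal.rpow_mul, ENNReal.rpow_two]
    norm_num
  calc ∫⁻ x, f x * g x ∂μ
      = ∫⁻ x, ((fun x => f x * ρ x ^ (1 / 2 : ℝ)) * fun x => g x * (ρ x)⁻¹ ^ (1 / 2 : ℝ)) x ∂μ := by
        refine lintegral_congr_ae ?_
        filter_upwards [hρ0, hρtop] with x h0 htop
        rw [Pi.mul_apply, mul_mul_mul_comm, ← ENNReal.mul_rpow_of_nonneg _ _ (by norm_num),
          ENNReal.mul_inv_cancel h0 htop, ENNReal.one_rpow, mul_one]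
    _ ≤ _ := ENNReal.lintegral_mul_le_Lp_mul_Lq μ .two_two (by fun_prop) (by fun_prop)
    _ = _ := by simp only [hsq]

theorem sphereLIntegral_le_sphereSup {n : ℕ} (u : Euc n → ℂ) {r : ℝ} (hr : 0 < r) :
    sphereLIntegral n r (fun x => (‖u x‖₊ : ℝ≥0∞) ^ 2) ≤ ENNReal.ofReal (r ^ 2) * sphereSup u := by
  rw [← ENNReal.inv_mul_le_iff (by positivity) ENNReal.ofReal_ne_top]
  exact le_iSup₂ (f := fun R (_ : 0 < R) => (ENNReal.ofReal (R ^ 2))⁻¹ *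
    sphereLIntegral n R fun x => (‖u x‖₊ : ℝ≥0∞) ^ 2) r hr

theorem lintegral_sq_mul_norm_le_sphereSup_mul {n : ℕ} (hn : 1 ≤ n) {u : Euc n → ℂ}
    (hu : Measurable u) {g : Euc n → ℝ≥0∞} (hg : ContinuousOn g {0}ᶜ) :
    ∫⁻ x, (‖u x‖₊ : ℝ≥0∞) ^ 2 * g x * ENNReal.ofReal ‖x‖
      ≤ sphereSup u * ∫⁻ r in Ioi (0 : ℝ),
          ENNReal.ofReal (r ^ 3) * ⨆ x ∈ sphere (0 : Euc n) r, g x := by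
  have : Nonempty (Fin n) := ⟨⟨0, hn⟩⟩
  have hgm : Measurable g := measurable_of_continuousOn_compl_singleton 0 hg
  have hweight : AEMeasurable (fun r => ENNReal.ofReal (r ^ 3) * ⨆ x ∈ sphere (0 : Euc n) r, g x)
      (volume.restrict (Ioi 0)) :=
    (measurable_id.pow_const 3).ennreal_ofReal.aemeasurable.mul (aemeasurable_iSup_sphere hg)
  rw [lintegral_eq_lintegral_Ioi_toSphere volume (by fun_prop), finrank_euclideanSpace_fin,
    ← lintegral_const_mul'' _ hweight]
  refine setLIntegral_mono' measurableSet_Ioi fun r (hr : 0 < r) => ?_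
  set M := ⨆ x ∈ sphere (0 : Euc n) r, g x
  have hsphere (ω : sphere (0 : Euc n) 1) : r • (ω : Euc n) ∈ sphere (0 : Euc n) r := by
    simp [norm_smul, hr.le]
  calc ENNReal.ofReal (r ^ (n - 1)) * ∫⁻ ω, (‖u (r • (ω : Euc n))‖₊ : ℝ≥0∞) ^ 2 *
          g (r • (ω : Euc n)) * ENNReal.ofReal ‖r • (ω : Euc n)‖
            ∂(volume : Measure (Euc n)).toSphere
      ≤ ENNReal.ofReal (r ^ (n - 1)) * ∫⁻ ω, (‖u (r • (ω : Euc n))‖₊ : ℝ≥0∞) ^ 2 *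
          (ENNReal.ofReal r * M) ∂(volume : Measure (Euc n)).toSphere := by
        gcongr _ * ?_
        refine lintegral_mono fun ω => ?_
        rw [mem_sphere_zero_iff_norm.1 (hsphere ω), mul_assoc, mul_comm (g _)]
        gcongr
        exact le_biSup g (hsphere ω)
    _ = ENNReal.ofReal r * M * sphereLIntegral n r (fun x => (‖u x‖₊ : ℝ≥0∞) ^ 2) := by
        rw [lintegral_mul_const _ (by fun_prop), sphereLIntegral]
        ring
    _ ≤ ENNReal.ofReal r * M * (ENNReal.ofReal (r ^ 2) * sphereSup u) := by
        gcongr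
        exact sphereLIntegral_le_sphereSup u hr
    _ = sphereSup u * (ENNReal.ofReal (r ^ 3) * M) := by
        rw [pow_succ' r 2, ENNReal.ofReal_mul hr.le]
        ring

/-- **Weighted Cauchy–Schwarz estimate (3.21)**:
`∫ |u||h||w| ≤ (∫|w|²/|x|)^{1/2} · (sup_{R>0}(1/R²)∫_{|x|=R}|u|²dσ)^{1/2}
  · (∫₀^∞ r³ sup_{|x|=r}|h|² dr)^{1/2}`. -/
theorem weighted_cauchy_schwarz
    (n : ℕ) (hn : 2 ≤ n) (u w : Euc n → ℂ) (h : Euc n → ℝ)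
    (hu : Continuous u) (hw : Continuous w) (hh : ContinuousOn h {(0 : Euc n)}ᶜ) :
    ∫⁻ x, (‖u x‖₊ : ℝ≥0∞) * ENNReal.ofReal |h x| * (‖w x‖₊ : ℝ≥0∞)
      ≤ (∫⁻ x, (‖w x‖₊ : ℝ≥0∞) ^ 2 * (ENNReal.ofReal ‖x‖)⁻¹) ^ (1/2 : ℝ)
        * (sphereSup u) ^ (1/2 : ℝ)
        * (∫⁻ r in Set.Ioi (0 : ℝ), ENNReal.ofReal (r ^ 3) *
            ⨆ x ∈ Metric.sphere (0 : Euc n) r, ENNReal.ofReal (h x ^ 2)) ^ (1/2 : ℝ) := by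
  have : Nonempty (Fin n) := ⟨⟨0, by omega⟩⟩
  have hhm : Measurable h := measurable_of_continuousOn_compl_singleton 0 hh
  have hnorm0 : ∀ᵐ x : Euc n, ENNReal.ofReal ‖x‖ ≠ 0 := by
    filter_upwards [volume.ae_ne 0] with x hx
    simpa using hx
  refine (ENNReal.lintegral_mul_le_weighted_L2 (by fun_prop) (by fun_prop) (by fun_prop) hnorm0
    (.of_forall fun _ => ENNReal.ofReal_ne_top)).trans ?_
  rw [mul_assoc, ← ENNReal.mul_rpow_of_nonneg (sphereSup u) _ (by norm_num), mul_comm]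
  gcongr
  simpa only [mul_pow, ← ENNReal.ofReal_pow (abs_nonneg _), sq_abs] using
    lintegral_sq_mul_norm_le_sphereSup_mul (by omega) hu.measurable
      (g := fun x => ENNReal.ofReal (h x ^ 2))
      (ENNReal.continuous_ofReal.comp_continuousOn (hh.pow 2))
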